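/- The q-trinomial coefficients satisfy the identity q^{L+1-d} T(n+1, d-1, L) + T(n, d, L) = T(n-1, d-1, L) + q^d T(n-1, d, L) for all integers n, d and L ≥ 0. -/

import Mathlib

/- `qq` plays the role of the formal variable `q`, as an element of the
field of rational functions over `ℚ`. -/
noncomputable def qq : RatFunc ℚ := RatFunc.X

/-- `(q)_n = ∏_{i=1}^n (1 - q^i)`. -/
noncomputable def qp (n : ℕ) : RatFunc ℚ := ∏ i ∈ Finset.range n, (1 - qq ^ (i + 1))

/-- `(q)_n` for an integer index, declared to be `0` for negative `n`
(so that terms with a negative factorial index vanish upon division). -/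
noncomputable def qpz (n : ℤ) : RatFunc ℚ := if 0 ≤ n then qp n.toNat else 0

/-- The Andrews–Baxter `q`-trinomial coefficient
`T(n,d,L) = Σ_k q^{k(k+d-n)} (q)_L / ((q)_k (q)_{k+d} (q)_{L-2k-d})`,
where terms with a negative factorial index are zero.  (Any term with a
nonzero contribution has `k ≤ L`, so the range below suffices.) -/
noncomputable def qT (n d : ℤ) (L : ℕ) : RatFunc ℚ :=
  ∑ k ∈ Finset.range (L + 1),
    qq ^ ((k : ℤ) * ((k : ℤ) + d - n)) * qp L /
      (qp k * qpz ((k : ℤ) + d) * qpz ((L : ℤ) - 2 * k - d))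

/-! The identity holds summand by summand.  With `a = k + d` and `b = L - 2k - d`,
after factoring out `q^{k(k+d-n)} (q)_L / (q)_k` it reads
`(1 - q^{b+1}) / ((q)_{a-1} (q)_{b+1}) = (1 - q^a) / ((q)_a (q)_b)`, and both sides equal
`1 / ((q)_{a-1} (q)_b)` by the relation `(1 - q^m) / (q)_m = 1 / (q)_{m-1}`, which holds for every
integer `m` once `(q)_m = 0` for `m < 0` (and `1 / 0 = 0`). -/

open Finset Polynomial

lemma qq_ne_zero : qq ≠ 0 := RatFunc.X_ne_zero

lemma one_sub_qq_pow_ne_zero {j : ℕ} (hj : j ≠ 0) : 1 - qq ^ j ≠ 0 := by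
  rw [qq, ← RatFunc.algebraMap_X, ← map_pow, ← map_one (algebraMap ℚ[X] _), ← map_sub]
  refine RatFunc.algebraMap_ne_zero ?_
  rw [← neg_sub, neg_ne_zero, ← C_1]
  exact X_pow_sub_C_ne_zero (Nat.pos_of_ne_zero hj) 1

lemma qp_succ (j : ℕ) : qp (j + 1) = qp j * (1 - qq ^ (j + 1)) := prod_range_succ _ _

lemma qpz_natCast (j : ℕ) : qpz j = qp j := by simp [qpz]

lemma qpz_of_neg {m : ℤ} (hm : m < 0) : qpz m = 0 := if_neg hm.not_ge

lemma one_sub_qq_zpow_mul_inv_qpz (m : ℤ) : (1 - qq ^ m) * (qpz m)⁻¹ = (qpz (m - 1))⁻¹ := by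
  rcases lt_trichotomy m 0 with hm | rfl | hm
  · simp [qpz_of_neg hm, qpz_of_neg (show m - 1 < 0 by omega)]
  · simp [qpz_of_neg (show (-1 : ℤ) < 0 by omega)]
  · obtain ⟨j, rfl⟩ : ∃ j : ℕ, m = j + 1 := ⟨m.toNat - 1, by omega⟩
    have hj : 1 - qq ^ (j + 1) ≠ 0 := one_sub_qq_pow_ne_zero j.succ_ne_zero
    rw [add_sub_cancel_right, ← Nat.cast_succ, qpz_natCast, qpz_natCast, qp_succ, zpow_natCast,
      mul_inv, mul_left_comm, mul_inv_cancel₀ hj, mul_one]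

noncomputable def qTSummand (n d : ℤ) (L k : ℕ) : RatFunc ℚ :=
  qq ^ ((k : ℤ) * ((k : ℤ) + d - n)) * qp L /
    (qp k * qpz ((k : ℤ) + d) * qpz ((L : ℤ) - 2 * k - d))

lemma qT_eq_sum_qTSummand (n d : ℤ) (L : ℕ) :
    qT n d L = ∑ k ∈ range (L + 1), qTSummand n d L k := rfl

lemma qTSummand_pair_identity (n d : ℤ) (L k : ℕ) :
    qq ^ ((L : ℤ) + 1 - d) * qTSummand (n + 1) (d - 1) L k + qTSummand n d L k =
      qTSummand (n - 1) (d - 1) L k + qq ^ d * qTSummand (n - 1) d L k := by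
  have hqa : (1 - qq ^ ((k : ℤ) + d)) * (qpz ((k : ℤ) + d))⁻¹ = (qpz ((k : ℤ) + (d - 1)))⁻¹ := by
    rw [one_sub_qq_zpow_mul_inv_qpz, add_sub_assoc]
  have hqb : (1 - qq ^ ((L : ℤ) - 2 * k - (d - 1))) * (qpz ((L : ℤ) - 2 * k - (d - 1)))⁻¹ =
      (qpz ((L : ℤ) - 2 * k - d))⁻¹ := by
    rw [one_sub_qq_zpow_mul_inv_qpz]; congr 2; ring
  have hpow₁ : qq ^ ((L : ℤ) + 1 - d) * qq ^ ((k : ℤ) * (k + (d - 1) - (n + 1))) =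
      qq ^ ((k : ℤ) * (k + d - n)) * qq ^ ((L : ℤ) - 2 * k - (d - 1)) := by
    rw [← zpow_add₀ qq_ne_zero, ← zpow_add₀ qq_ne_zero]; congr 1; ring
  have hpow₂ : qq ^ ((k : ℤ) * (k + (d - 1) - (n - 1))) = qq ^ ((k : ℤ) * (k + d - n)) := by
    congr 1; ring
  have hpow₃ : qq ^ d * qq ^ ((k : ℤ) * (k + d - (n - 1))) =
      qq ^ ((k : ℤ) * (k + d - n)) * qq ^ ((k : ℤ) + d) := by
    rw [← zpow_add₀ qq_ne_zero, ← zpow_add₀ qq_ne_zero]; congr 1; ring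
  simp only [qTSummand, div_eq_mul_inv, mul_inv]
  set c := qp L * (qp k)⁻¹
  linear_combination c * (qpz ((k : ℤ) + (d - 1)))⁻¹ * (qpz ((L : ℤ) - 2 * k - (d - 1)))⁻¹ *
      (hpow₁ - hpow₂) - c * (qpz ((k : ℤ) + d))⁻¹ * (qpz ((L : ℤ) - 2 * k - d))⁻¹ * hpow₃ +
    c * qq ^ ((k : ℤ) * (k + d - n)) *
      ((qpz ((L : ℤ) - 2 * k - d))⁻¹ * hqa - (qpz ((k : ℤ) + (d - 1)))⁻¹ * hqb)

/-- `q^{L+1-d} T(n+1,d-1,L) + T(n,d,L) = T(n-1,d-1,L) + q^d T(n-1,d,L)`. -/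
theorem qT_pair_identity (n d : ℤ) (L : ℕ) :
    qq ^ ((L : ℤ) + 1 - d) * qT (n + 1) (d - 1) L + qT n d L =
      qT (n - 1) (d - 1) L + qq ^ d * qT (n - 1) d L := by
  simp only [qT_eq_sum_qTSummand, mul_sum, ← sum_add_distrib]
  exact sum_congr rfl fun k _ => qTSummand_pair_identity n d L k
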